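/- arXiv:1107.5108 — 3 statements merged into one kernel-verified Lean document; each statement's English description precedes it below -/
import Mathlib

section
/- For any rotation matrices R1, R2, R3 in SO(3), the inequality (1/2)·tr(R1ᵀR2 − R1ᵀR3R2ᵀR3) ≥ φ(R1ᵀR3) − φ(R1ᵀR2) + λ_min(sym(R1ᵀR3))·φ(R3ᵀR2) holds, where φ(R) := (1/2)‖I₃ − R‖_F² = tr(I₃ − R), sym(M) := (1/2)(M + Mᵀ), and λ_min(M) denotes the minimal eigenvalue of M. -/
/-!
Put `A = R1ᵀ R3` and `B = R3ᵀ R2`, so that `R1ᵀ R2 = A B` and `R1ᵀ R3 R2ᵀ R3 = A Bᵀ`. The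
inequality becomes `0 ≤ tr ((sym A - λ I) (I - sym B))` with `λ = λ_min (sym A)`. Both factors are
positive semidefinite: the first by the choice of `λ`, the second because
`I - sym B = ½ (I - B)ᵀ (I - B)` for orthogonal `B`; and the trace of a product of two positive
semidefinite matrices is nonnegative.
-/

open Matrix BigOperators

def SO3 (R : Matrix (Fin 3) (Fin 3) ℝ) : Prop := Rᵀ * R = 1 ∧ R.det = 1

noncomputable def phi (R : Matrix (Fin 3) (Fin 3) ℝ) : ℝ := Matrix.trace (1 - R)

noncomputable def symPart (M : Matrix (Fin 3) (Fin 3) ℝ) : Matrix (Fin 3) (Fin 3) ℝ :=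
  (1 / 2 : ℝ) • (M + Mᵀ)

noncomputable def lamMin (M : Matrix (Fin 3) (Fin 3) ℝ) : ℝ := sInf (spectrum ℝ M)

namespace Matrix

variable {n : Type*} [Fintype n]

open scoped ComplexOrder in
theorem PosSemidef.trace_mul_nonneg {𝕜 : Type*} [RCLike 𝕜] {P Q : Matrix n n 𝕜}
    (hP : P.PosSemidef) (hQ : Q.PosSemidef) : 0 ≤ (P * Q).trace := by
  classical
  open scoped MatrixOrder in
  obtain ⟨B, rfl⟩ := CStarAlgebra.nonneg_iff_eq_star_mul_self.mp hP.nonneg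
  rw [Matrix.mul_assoc, trace_mul_comm]
  exact (hQ.mul_mul_conjTranspose_same B).trace_nonneg

theorem posSemidef_one_sub_half_smul_add_transpose [DecidableEq n] {B : Matrix n n ℝ}
    (hB : Bᵀ * B = 1) : (1 - (1 / 2 : ℝ) • (B + Bᵀ)).PosSemidef := by
  have h : 1 - (1 / 2 : ℝ) • (B + Bᵀ) = (1 / 2 : ℝ) • ((1 - B)ᴴ * (1 - B)) := by
    simp only [conjTranspose_eq_transpose_of_trivial, transpose_sub, transpose_one, sub_mul,
      mul_sub, one_mul, mul_one, hB]
    module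
  rw [h]
  exact (posSemidef_conjTranspose_mul_self _).smul (by norm_num)

theorem IsHermitian.posSemidef_sub_smul_one [DecidableEq n] {S : Matrix n n ℝ}
    (hS : S.IsHermitian) {c : ℝ} (hc : ∀ x ∈ spectrum ℝ S, c ≤ x) :
    (S - c • 1).PosSemidef := by
  refine posSemidef_iff_isHermitian_and_spectrum_nonneg.mpr
    ⟨hS.sub (isHermitian_one.smul (IsSelfAdjoint.all c)), ?_⟩
  rw [← Algebra.algebraMap_eq_smul_one, ← spectrum.sub_singleton_eq]
  rintro _ ⟨x, hx, _, rfl, rfl⟩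
  exact sub_nonneg.mpr (hc x hx)

theorem mul_trace_one_sub_le_of_le_spectrum [DecidableEq n] {A B : Matrix n n ℝ} {c : ℝ}
    (hB : Bᵀ * B = 1) (hc : ∀ x ∈ spectrum ℝ ((1 / 2 : ℝ) • (A + Aᵀ)), c ≤ x) :
    c * (1 - B).trace ≤ A.trace - (A * B).trace / 2 - (A * Bᵀ).trace / 2 := by
  have hS : ((1 / 2 : ℝ) • (A + Aᵀ)).IsHermitian := by
    simpa only [conjTranspose_eq_transpose_of_trivial] using
      (isHermitian_add_transpose_self A).smul (IsSelfAdjoint.all (1 / 2 : ℝ))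
  have hpos := (hS.posSemidef_sub_smul_one hc).trace_mul_nonneg
    (posSemidef_one_sub_half_smul_add_transpose hB)
  have htr₁ : (Aᵀ * B).trace = (A * Bᵀ).trace := by
    rw [← trace_transpose, transpose_mul, transpose_transpose, trace_mul_comm]
  have htr₂ : (Aᵀ * Bᵀ).trace = (A * B).trace := by
    rw [← transpose_mul, trace_transpose, trace_mul_comm]
  simp only [sub_mul, mul_sub, add_mul, mul_add, Matrix.smul_mul, Matrix.mul_smul, mul_one,
    one_mul, trace_sub, trace_add, trace_smul, trace_transpose, htr₁, htr₂, smul_eq_mul] at hpos ⊢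
  linarith

end Matrix

theorem stmt0_general (R1 R2 R3 : Matrix (Fin 3) (Fin 3) ℝ)
    (h2 : SO3 R2) (h3 : SO3 R3) :
    (1 / 2 : ℝ) * Matrix.trace (R1ᵀ * R2 - R1ᵀ * R3 * R2ᵀ * R3) ≥
      phi (R1ᵀ * R3) - phi (R1ᵀ * R2) + lamMin (symPart (R1ᵀ * R3)) * phi (R3ᵀ * R2) := by
  have hR3 : R3 * R3ᵀ = 1 := mul_eq_one_comm.mp h3.1
  have hprod : R1ᵀ * R2 = R1ᵀ * R3 * (R3ᵀ * R2) := by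
    rw [Matrix.mul_assoc, ← Matrix.mul_assoc R3, hR3, Matrix.one_mul]
  have hprodT : R1ᵀ * R3 * R2ᵀ * R3 = R1ᵀ * R3 * (R3ᵀ * R2)ᵀ := by
    rw [transpose_mul, transpose_transpose, Matrix.mul_assoc]
  have horth : (R3ᵀ * R2)ᵀ * (R3ᵀ * R2) = 1 := by
    rw [transpose_mul, transpose_transpose, Matrix.mul_assoc, ← Matrix.mul_assoc R3, hR3,
      Matrix.one_mul, h2.1]
  have key := mul_trace_one_sub_le_of_le_spectrum horth fun x hx =>
    csInf_le (finite_real_spectrum (A := symPart (R1ᵀ * R3))).bddBelow hx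
  rw [ge_iff_le, hprod, hprodT]
  simp only [phi, lamMin, trace_sub] at key ⊢
  linarith

theorem stmt0 (R1 R2 R3 : Matrix (Fin 3) (Fin 3) ℝ)
    (h1 : SO3 R1) (h2 : SO3 R2) (h3 : SO3 R3) :
    (1 / 2 : ℝ) * Matrix.trace (R1ᵀ * R2 - R1ᵀ * R3 * R2ᵀ * R3) ≥
      phi (R1ᵀ * R3) - phi (R1ᵀ * R2) + lamMin (symPart (R1ᵀ * R3)) * phi (R3ᵀ * R2) :=
  stmt0_general R1 R2 R3 h2 h3
end

section
/- Let R* and R̄ be rotation matrices in SO(3) such that φ((R*)ᵀR̄) < φ_0 for some φ_0 > 0, where φ(R) := tr(I₃ − R). Then λ_min(sym((R*)ᵀR̄)) ≥ 1 − √(2φ_0). -/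
open Matrix BigOperators

/-!
If `μ` is an eigenvalue of `sym Q` with eigenvector `v`, then `(1 - μ) |v|² = vᵀ (I - Q) v`,
and Cauchy–Schwarz bounds this by `‖I - Q‖_F |v|²`. For orthogonal `Q` one has
`‖I - Q‖_F² = tr ((I - Q)(I - Q)ᵀ) = 2 tr (I - Q) = 2 φ(Q)`, so `1 - μ ≤ √(2 φ(Q)) < √(2 φ₀)`.
-/

namespace Matrix

variable {n : Type*} [Fintype n]

theorem exists_mulVec_eq_smul_of_mem_spectrum {K : Type*} [Field K] [DecidableEq n]
    {A : Matrix n n K} {μ : K} (hμ : μ ∈ spectrum K A) :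
    ∃ v : n → K, v ≠ 0 ∧ A *ᵥ v = μ • v := by
  rw [← spectrum_toLin', ← Module.End.hasEigenvalue_iff_mem_spectrum] at hμ
  obtain ⟨v, hv⟩ := hμ.exists_hasEigenvector
  exact ⟨v, hv.2, by simpa using hv.apply_eq_smul⟩

theorem sq_dotProduct_le (v w : n → ℝ) : (v ⬝ᵥ w) ^ 2 ≤ (v ⬝ᵥ v) * (w ⬝ᵥ w) := by
  simpa [dotProduct, sq] using Finset.sum_mul_sq_le_sq_mul_sq Finset.univ v w

theorem sq_dotProduct_mulVec_le (A : Matrix n n ℝ) (v : n → ℝ) :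
    (v ⬝ᵥ A *ᵥ v) ^ 2 ≤ trace (A * Aᵀ) * (v ⬝ᵥ v) ^ 2 := by
  have hrows : A *ᵥ v ⬝ᵥ A *ᵥ v ≤ trace (A * Aᵀ) * (v ⬝ᵥ v) := by
    rw [trace, Finset.sum_mul]
    refine Finset.sum_le_sum fun i _ => ?_
    have hdiag : (A * Aᵀ).diag i = A i ⬝ᵥ A i := rfl
    rw [hdiag, ← sq]
    exact sq_dotProduct_le (A i) v
  calc (v ⬝ᵥ A *ᵥ v) ^ 2 ≤ (v ⬝ᵥ v) * (A *ᵥ v ⬝ᵥ A *ᵥ v) := sq_dotProduct_le _ _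
    _ ≤ (v ⬝ᵥ v) * (trace (A * Aᵀ) * (v ⬝ᵥ v)) :=
        mul_le_mul_of_nonneg_left hrows (by simpa using dotProduct_self_star_nonneg v)
    _ = trace (A * Aᵀ) * (v ⬝ᵥ v) ^ 2 := by ring

theorem trace_one_sub_mul_transpose_of_transpose_mul_self [DecidableEq n] {Q : Matrix n n ℝ}
    (hQ : Qᵀ * Q = 1) : trace ((1 - Q) * (1 - Q)ᵀ) = 2 * trace (1 - Q) := by
  have hexpand : (1 - Q) * (1 - Q)ᵀ = 1 - Q - Qᵀ + Q * Qᵀ := by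
    rw [transpose_sub, transpose_one]; noncomm_ring
  rw [hexpand, mul_eq_one_comm.mp hQ]
  simp only [trace_add, trace_sub, trace_transpose]
  ring

end Matrix

theorem dotProduct_symPart_mulVec (M : Matrix (Fin 3) (Fin 3) ℝ) (v : Fin 3 → ℝ) :
    v ⬝ᵥ symPart M *ᵥ v = v ⬝ᵥ M *ᵥ v := by
  have htranspose : v ⬝ᵥ Mᵀ *ᵥ v = v ⬝ᵥ M *ᵥ v := by
    rw [dotProduct_mulVec, vecMul_transpose, dotProduct_comm]
  simp only [symPart, smul_mulVec, add_mulVec, dotProduct_smul, dotProduct_add, htranspose,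
    smul_eq_mul]
  ring

theorem isHermitian_symPart (M : Matrix (Fin 3) (Fin 3) ℝ) : (symPart M).IsHermitian := by
  ext i j
  simp only [symPart, conjTranspose_apply, star_trivial, Matrix.smul_apply, Matrix.add_apply,
    transpose_apply]
  ring

theorem one_sub_le_sqrt_phi_of_mem_spectrum_symPart {Q : Matrix (Fin 3) (Fin 3) ℝ}
    (hQ : Qᵀ * Q = 1) {μ : ℝ} (hμ : μ ∈ spectrum ℝ (symPart Q)) :
    1 - μ ≤ Real.sqrt (2 * phi Q) := by
  obtain ⟨v, hv0, hv⟩ := exists_mulVec_eq_smul_of_mem_spectrum hμ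
  have hvv : 0 < v ⬝ᵥ v := by simpa using dotProduct_self_star_pos_iff.mpr hv0
  have hquad : v ⬝ᵥ (1 - Q) *ᵥ v = (1 - μ) * (v ⬝ᵥ v) := by
    rw [sub_mulVec, one_mulVec, dotProduct_sub, ← dotProduct_symPart_mulVec, hv,
      dotProduct_smul, smul_eq_mul]
    ring
  have hbound := sq_dotProduct_mulVec_le (1 - Q) v
  rw [hquad, trace_one_sub_mul_transpose_of_transpose_mul_self hQ, mul_pow] at hbound
  have hsq : (1 - μ) ^ 2 ≤ 2 * phi Q := le_of_mul_le_mul_right hbound (by positivity)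
  exact (le_abs_self _).trans (Real.abs_le_sqrt hsq)

theorem SO3.transpose_mul_transpose_mul_self {R S : Matrix (Fin 3) (Fin 3) ℝ}
    (hR : SO3 R) (hS : SO3 S) : (Rᵀ * S)ᵀ * (Rᵀ * S) = 1 := by
  rw [transpose_mul, transpose_transpose, Matrix.mul_assoc, ← Matrix.mul_assoc R,
    mul_eq_one_comm.mp hR.1, Matrix.one_mul, hS.1]

theorem stmt3_general (Rstar Rbar : Matrix (Fin 3) (Fin 3) ℝ)
    (hs : SO3 Rstar) (hb : SO3 Rbar) (φ0 : ℝ)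
    (h : phi (Rstarᵀ * Rbar) < φ0) :
    lamMin (symPart (Rstarᵀ * Rbar)) ≥ 1 - Real.sqrt (2 * φ0) := by
  have hsym := isHermitian_symPart (Rstarᵀ * Rbar)
  refine le_csInf ⟨_, hsym.eigenvalues_mem_spectrum_real 0⟩ fun μ hμ => ?_
  have hμ_bound := one_sub_le_sqrt_phi_of_mem_spectrum_symPart
    (SO3.transpose_mul_transpose_mul_self hs hb) hμ
  have hsqrt_mono : Real.sqrt (2 * phi (Rstarᵀ * Rbar)) ≤ Real.sqrt (2 * φ0) :=
    Real.sqrt_le_sqrt (by linarith)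
  linarith

theorem stmt3 (Rstar Rbar : Matrix (Fin 3) (Fin 3) ℝ)
    (hs : SO3 Rstar) (hb : SO3 Rbar) (φ0 : ℝ) (hφ0 : 0 < φ0)
    (h : phi (Rstarᵀ * Rbar) < φ0) :
    lamMin (symPart (Rstarᵀ * Rbar)) ≥ 1 - Real.sqrt (2 * φ0) :=
  stmt3_general Rstar Rbar hs hb φ0 h
end

section
/- Let q_1,…,q_n ∈ ℝ³ and let G_T be a spanning tree rooted at node j* of an undirected graph G_u on {1,…,n}. For each node i let d(i) be the length of the tree path P(i) from j* to i, and for each tree edge E let δ(E;i) = 1 if P(i) contains E and 0 otherwise. Define W' := max over tree edges E of ∑_i δ(E;i)·d(i). Then ∑_{i=1}^n ‖q_i − q_{j*}‖² ≤ W' · ∑_{E=(u,v) ∈ edges(G_T)} ‖q_u − q_v‖². -/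
/-!
Telescoping along the tree path `P(i)` and Cauchy–Schwarz give
`‖q i - q j*‖² ≤ d(i) · ∑_{E ∈ P(i)} ‖q_u - q_v‖²`. Summing over `i` and exchanging the sums,
each tree edge `E` collects the weight `∑ i, δ(E;i) · d(i) ≤ W'`.
-/

open Finset

theorem norm_sub_sq_le_mul_sum_norm_sub_sq {E : Type*} [SeminormedAddCommGroup E]
    (p : ℕ → E) (k : ℕ) :
    ‖p k - p 0‖ ^ 2 ≤ k * ∑ l ∈ range k, ‖p (l + 1) - p l‖ ^ 2 := by
  have htriangle : ‖p k - p 0‖ ≤ ∑ l ∈ range k, ‖p (l + 1) - p l‖ := by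
    rw [← sum_range_sub p k]
    exact norm_sum_le _ _
  calc ‖p k - p 0‖ ^ 2 ≤ (∑ l ∈ range k, ‖p (l + 1) - p l‖) ^ 2 := by gcongr
    _ ≤ k * ∑ l ∈ range k, ‖p (l + 1) - p l‖ ^ 2 := by
      simpa using sq_sum_le_card_mul_sum_sq (s := range k) (f := fun l => ‖p (l + 1) - p l‖)

theorem sum_range_comp_eq_sum_ite {α M : Type*} [DecidableEq α] [AddCommMonoid M] {s : Finset α}
    {e : ℕ → α} {k : ℕ} (he : Set.InjOn e (range k)) (hs : ∀ l < k, e l ∈ s) (f : α → M) :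
    ∑ l ∈ range k, f (e l) = ∑ E ∈ s, if ∃ l < k, e l = E then f E else 0 := by
  have himage : s.filter (fun E => ∃ l < k, e l = E) = (range k).image e := by
    ext E
    simp only [mem_filter, mem_image, mem_range]
    constructor
    · exact fun ⟨_, hE⟩ => hE
    · rintro ⟨l, hl, rfl⟩
      exact ⟨hs l hl, l, hl, rfl⟩
  rw [← sum_filter, himage, sum_image he]

open Classical in
/-- Tree-path bound: `∑ i ‖q_i − q_{j*}‖² ≤ W' · ∑_{edges} ‖q_u − q_v‖²`, where for each
node `i` the tree path from the root `j*` to `i` is `path i 0 = j*, …, path i (d i) = i`,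
its edges (assumed distinct) belong to the tree edge set, and `W'` bounds
`∑ i δ(E;i)·d(i)` for every tree edge `E`. -/
theorem stmt13 (n : ℕ) (q : Fin n → EuclideanSpace ℝ (Fin 3)) (jstar : Fin n)
    (edges : Finset (Fin n × Fin n)) (path : Fin n → ℕ → Fin n) (d : Fin n → ℕ)
    (hstart : ∀ i, path i 0 = jstar) (hend : ∀ i, path i (d i) = i)
    (hedge : ∀ i, ∀ l < d i, (path i l, path i (l + 1)) ∈ edges)
    (hdistinct : ∀ i, ∀ l < d i, ∀ l' < d i,
      (path i l, path i (l + 1)) = (path i l', path i (l' + 1)) → l = l')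
    (W' : ℝ)
    (hW' : ∀ E ∈ edges,
      (∑ i, if (∃ l < d i, (path i l, path i (l + 1)) = E) then (d i : ℝ) else 0) ≤ W') :
    ∑ i, ‖q i - q jstar‖ ^ 2 ≤ W' * ∑ E ∈ edges, ‖q E.1 - q E.2‖ ^ 2 := by
  set F : Fin n × Fin n → ℝ := fun E => ‖q E.1 - q E.2‖ ^ 2
  set δ : Fin n → Fin n × Fin n → Prop := fun i E => ∃ l < d i, (path i l, path i (l + 1)) = E
  have hnode : ∀ i, ‖q i - q jstar‖ ^ 2 ≤ d i * ∑ E ∈ edges, if δ i E then F E else 0 := by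
    intro i
    have hinj : Set.InjOn (fun l => (path i l, path i (l + 1))) (range (d i)) :=
      fun l hl l' hl' => hdistinct i l (mem_range.mp hl) l' (mem_range.mp hl')
    have hpath := norm_sub_sq_le_mul_sum_norm_sub_sq (fun l => q (path i l)) (d i)
    have hstep : ∀ l, ‖q (path i (l + 1)) - q (path i l)‖ ^ 2 = F (path i l, path i (l + 1)) :=
      fun l => by rw [norm_sub_rev]
    simp only [hstart, hend, hstep] at hpath
    rwa [sum_range_comp_eq_sum_ite (f := F) hinj (hedge i)] at hpath
  calc ∑ i, ‖q i - q jstar‖ ^ 2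
      ≤ ∑ i, d i * ∑ E ∈ edges, if δ i E then F E else 0 := sum_le_sum fun i _ => hnode i
    _ = ∑ E ∈ edges, (∑ i, if δ i E then (d i : ℝ) else 0) * F E := by
      simp only [mul_sum, sum_mul, mul_ite, ite_mul, mul_zero, zero_mul]
      exact sum_comm
    _ ≤ ∑ E ∈ edges, W' * F E := sum_le_sum fun E hE => by gcongr; exact hW' E hE
    _ = W' * ∑ E ∈ edges, F E := (mul_sum ..).symm
end
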